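/- arXiv:math/0310192 — 4 statements merged into one kernel-verified Lean document; each statement's English description precedes it below -/
import Mathlib

section
/- Let $R$ be a Noetherian local domain dominated by a rank 1 valuation ring $V$ of its quotient field, with valuation $\nu$. Define $p(\hat R)_\infty \subset \hat R$ as the set of $f \in \hat R$ such that some (equivalently, every) Cauchy sequence $\{f_n\}$ in $R$ converging to $f$ satisfies: for all $\rho$ in the value group, $\nu(f_n) > \rho$ for $n \gg 0$. Then $p(\hat R)_\infty$ is a prime ideal of $\hat R$ and $p(\hat R)_\infty \cap R = (0)$. -/
/-!
Extending `ν` by `⊤` at `0` gives an additive valuation `v` on `R`, nonnegative on `R` and positive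
on the finitely generated ideal `m`; hence `v ≥ n • ε` on `mⁿ` for some real `ε > 0`. Thus
`m`-adically close elements of `R` are `v`-adically close: whether `v (cₙ) → ∞` along a sequence
converging to `f ∈ R̂` depends only on `f`, and if it fails, `v (cₙ)` is eventually a finite
constant. The first fact makes `p(R̂)_∞` an ideal meeting `R` in `0` (a constant sequence `x ≠ 0`
has finite value); the second makes it prime, since the eventual values of two non-members add up
to a finite eventual value of their product.
-/

section

variable {R : Type*} [CommRing R] [IsDomain R] [IsNoetherianRing R] [IsLocalRing R]

/-- `c` is a Cauchy sequence in `R` for the `m_R`-adic topology. -/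
def IsAdicCauchy (c : ℕ → R) : Prop :=
  ∀ i : ℕ, ∃ N, ∀ m n, N ≤ m → N ≤ n → c m - c n ∈ (IsLocalRing.maximalIdeal R) ^ i

/-- The Cauchy sequence `c` in `R` converges to `f` in the `m_R`-adic completion `R̂`. -/
def ConvergesTo (c : ℕ → R)
    (f : AdicCompletion (IsLocalRing.maximalIdeal R) R) : Prop :=
  ∀ i : ℕ, ∃ N, ∀ n, N ≤ n →
    AdicCompletion.eval (IsLocalRing.maximalIdeal R) R i f = Submodule.Quotient.mk (c n)

/-- The sequence `c` has values increasing beyond every element of the value group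
("value `∞`"), where `ν` is an additive rank 1 valuation on `Frac R`. -/
def HasInfiniteValue (ν : FractionRing R → ℝ) (c : ℕ → R) : Prop :=
  ∀ ρ : ℝ, ∃ N, ∀ n, N ≤ n → c n = 0 ∨ ρ < ν (algebraMap R (FractionRing R) (c n))

open IsLocalRing Filter Topology

namespace AddValuation

section Real

variable {K : Type*} [Field K]

open Classical in
noncomputable def ofReal (ν : K → ℝ)
    (hmul : ∀ x y : K, x ≠ 0 → y ≠ 0 → ν (x * y) = ν x + ν y)
    (hadd : ∀ x y : K, x ≠ 0 → y ≠ 0 → x + y ≠ 0 → min (ν x) (ν y) ≤ ν (x + y)) :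
    AddValuation K (WithTop ℝ) :=
  AddValuation.of (fun x => if x = 0 then ⊤ else (ν x : WithTop ℝ)) (by simp)
    (by
      have h := hmul 1 1 one_ne_zero one_ne_zero
      rw [mul_one, left_eq_add] at h
      simp [h])
    (by
      intro x y
      by_cases hx : x = 0
      · simp [hx]
      by_cases hy : y = 0
      · simp [hy]
      by_cases hxy : x + y = 0
      · simp [hxy]
      simp only [hx, hy, hxy, if_false, ← WithTop.coe_min, WithTop.coe_le_coe]
      exact hadd x y hx hy hxy)
    (by
      intro x y
      by_cases hx : x = 0
      · simp [hx]
      by_cases hy : y = 0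
      · simp [hy]
      simp [hx, hy, hmul x y hx hy, WithTop.coe_add])

theorem ofReal_apply_of_ne_zero {ν : K → ℝ} {hmul hadd} {x : K} (hx : x ≠ 0) :
    ofReal ν hmul hadd x = ν x :=
  if_neg hx

theorem comap_ofReal_apply {A : Type*} [CommRing A] [IsDomain A] {ν : FractionRing A → ℝ}
    {hmul hadd} {x : A} (hx : x ≠ 0) :
    (ofReal ν hmul hadd).comap (algebraMap A (FractionRing A)) x =
      ν (algebraMap A (FractionRing A) x) :=
  ofReal_apply_of_ne_zero (hmul := hmul) (hadd := hadd)
    ((map_ne_zero_iff _ (IsFractionRing.injective A _)).2 hx)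

end Real

section Ideal

variable {A Γ : Type*} [CommRing A] [LinearOrderedAddCommMonoidWithTop Γ] (v : AddValuation A Γ)
  {I : Ideal A}

theorem nsmul_le_of_mem_pow {γ : Γ} (hv0 : ∀ x, 0 ≤ v x) (hI : ∀ x ∈ I, γ ≤ v x) :
    ∀ n : ℕ, ∀ x ∈ I ^ n, n • γ ≤ v x
  | 0, x, _ => by simpa using hv0 x
  | n + 1, x, hx => by
    rw [pow_succ] at hx
    refine Submodule.mul_induction_on hx (fun a ha b hb => ?_) (fun a b => v.map_le_add)
    rw [v.map_mul, succ_nsmul]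
    exact add_le_add (nsmul_le_of_mem_pow hv0 hI n a ha) (hI b hb)

theorem exists_pos_le_of_fg (hI : I.FG) (hv0 : ∀ x, 0 ≤ v x) (hpos : ∀ x ∈ I, 0 < v x) :
    ∃ γ, 0 < γ ∧ ∀ x ∈ I, γ ≤ v x := by
  obtain ⟨s, rfl⟩ := hI
  have h0top : (0 : Γ) < ⊤ := v.map_zero ▸ hpos 0 (zero_mem _)
  refine ⟨s.inf v, (Finset.lt_inf_iff h0top).2 fun g hg => hpos g (Submodule.subset_span hg),
    fun x hx => ?_⟩
  induction hx using Submodule.span_induction with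
  | mem g hg => exact Finset.inf_le hg
  | zero => simp
  | add x y _ _ hx hy => exact v.map_le_add hx hy
  | smul a x _ hx =>
    rw [smul_eq_mul, v.map_mul]
    exact le_add_of_nonneg_of_le (hv0 a) hx

theorem exists_forall_mem_pow_lt (v : AddValuation A (WithTop ℝ)) (hI : I.FG)
    (hv0 : ∀ x, 0 ≤ v x) (hpos : ∀ x ∈ I, 0 < v x) (ρ : ℝ) :
    ∃ n : ℕ, ∀ x ∈ I ^ n, (ρ : WithTop ℝ) < v x := by
  obtain ⟨γ, hγ, hγI⟩ := v.exists_pos_le_of_fg hI hv0 hpos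
  obtain ⟨δ, hδ, hδγ⟩ := exists_between hγ
  obtain ⟨ε, rfl⟩ := WithTop.ne_top_iff_exists.1 (hδγ.trans_le le_top).ne
  obtain ⟨n, hn⟩ := exists_nat_gt (ρ / ε)
  refine ⟨n, fun x hx => lt_of_lt_of_le ?_
    (v.nsmul_le_of_mem_pow hv0 (fun y hy => hδγ.le.trans (hγI y hy)) n x hx)⟩
  rw [← WithTop.coe_nsmul, WithTop.coe_lt_coe, nsmul_eq_mul]
  exact (div_lt_iff₀ (WithTop.coe_pos.1 hδ)).1 hn

end Ideal

section Tendsto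

variable {A Γ ι : Type*} [CommRing A] [LinearOrderedAddCommMonoidWithTop Γ] [TopologicalSpace Γ]
  [OrderTopology Γ] (v : AddValuation A Γ) {l : Filter ι} {c d : ι → A}

theorem tendsto_nhds_top_add (hc : Tendsto (fun n => v (c n)) l (𝓝 ⊤))
    (hd : Tendsto (fun n => v (d n)) l (𝓝 ⊤)) : Tendsto (fun n => v (c n + d n)) l (𝓝 ⊤) :=
  tendsto_nhds_top_mono (by simpa using hc.min hd) (.of_forall fun n => v.map_add (c n) (d n))

theorem tendsto_nhds_top_mul_left (hv0 : ∀ x, 0 ≤ v x) (hc : Tendsto (fun n => v (c n)) l (𝓝 ⊤))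
    (d : ι → A) : Tendsto (fun n => v (d n * c n)) l (𝓝 ⊤) :=
  tendsto_nhds_top_mono hc (.of_forall fun n => (le_add_of_nonneg_left (hv0 (d n))).trans_eq
    (v.map_mul (d n) (c n)).symm)

end Tendsto

end AddValuation

theorem quotient_mk_eq_mk_iff_sub_mem_pow {A : Type*} [CommRing A] {I : Ideal A} {n : ℕ}
    {x y : A} :
    (Submodule.Quotient.mk x : A ⧸ (I ^ n • ⊤ : Submodule A A)) = Submodule.Quotient.mk y ↔
      x - y ∈ I ^ n := by
  rw [Submodule.Quotient.eq, smul_eq_mul, Ideal.mul_top]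

section Completion

variable {A : Type*} [CommRing A] [IsLocalRing A]

namespace ConvergesTo

variable {c d : ℕ → A} {f g : AdicCompletion (maximalIdeal A) A}

theorem eventually_sub_mem_pow (hc : ConvergesTo c f) (hd : ConvergesTo d f) (i : ℕ) :
    ∀ᶠ n in atTop, c n - d n ∈ maximalIdeal A ^ i := by
  filter_upwards [eventually_atTop.2 (hc i), eventually_atTop.2 (hd i)] with n hcn hdn
  exact quotient_mk_eq_mk_iff_sub_mem_pow.1 (hcn.symm.trans hdn)

theorem isAdicCauchy (hc : ConvergesTo c f) : IsAdicCauchy c := fun i =>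
  let ⟨N, hN⟩ := hc i
  ⟨N, fun m n hm hn => quotient_mk_eq_mk_iff_sub_mem_pow.1 ((hN m hm).symm.trans (hN n hn))⟩

theorem add (hc : ConvergesTo c f) (hd : ConvergesTo d g) : ConvergesTo (c + d) (f + g) :=
  fun i => eventually_atTop.1 <| by
    filter_upwards [eventually_atTop.2 (hc i), eventually_atTop.2 (hd i)] with n hcn hdn
    rw [map_add, hcn, hdn]
    rfl

theorem mul (hc : ConvergesTo c f) (hd : ConvergesTo d g) : ConvergesTo (c * d) (f * g) :=
  fun i => eventually_atTop.1 <| by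
    filter_upwards [eventually_atTop.2 (hc i), eventually_atTop.2 (hd i)] with n hcn hdn
    change AdicCompletion.eval _ A i f * AdicCompletion.eval _ A i g = _
    rw [hcn, hdn]
    rfl

end ConvergesTo

theorem convergesTo_algebraMap (x : A) :
    ConvergesTo (fun _ => x) (algebraMap A (AdicCompletion (maximalIdeal A) A) x) :=
  fun i => ⟨0, fun _ _ => AdicCompletion.eval_of _ A i x⟩

theorem exists_convergesTo (f : AdicCompletion (maximalIdeal A) A) : ∃ c, ConvergesTo c f := by
  choose c hc using fun i => Submodule.Quotient.mk_surjective _ (AdicCompletion.eval _ A i f)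
  refine ⟨c, fun i => ⟨i, fun n hn => ?_⟩⟩
  rw [AdicCompletion.eval_apply, ← AdicCompletion.transitionMap_comp_eval_apply _ A hn,
    ← AdicCompletion.eval_apply, ← hc n]
  rfl

section Valuation

variable (v : AddValuation A (WithTop ℝ)) {c d : ℕ → A} {f g : AdicCompletion (maximalIdeal A) A}

theorem ConvergesTo.tendsto_nhds_top
    (hvm : ∀ ρ : ℝ, ∃ n, ∀ x ∈ maximalIdeal A ^ n, (ρ : WithTop ℝ) < v x)
    (hc : ConvergesTo c f) (hd : ConvergesTo d f) (hct : Tendsto (fun n => v (c n)) atTop (𝓝 ⊤)) :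
    Tendsto (fun n => v (d n)) atTop (𝓝 ⊤) := by
  rw [WithTop.tendsto_nhds_top_iff] at hct ⊢
  intro ρ
  obtain ⟨i, hi⟩ := hvm ρ
  filter_upwards [hct ρ, hc.eventually_sub_mem_pow hd i] with n hcn hsub
  calc (ρ : WithTop ℝ) < min (v (c n)) (v (c n - d n)) := lt_min hcn (hi _ hsub)
    _ ≤ v (c n - (c n - d n)) := v.map_sub _ _
    _ = v (d n) := by rw [sub_sub_cancel]

theorem ConvergesTo.exists_eventually_eq_coe
    (hvm : ∀ ρ : ℝ, ∃ n, ∀ x ∈ maximalIdeal A ^ n, (ρ : WithTop ℝ) < v x)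
    (hc : ConvergesTo c f) (hct : ¬Tendsto (fun n => v (c n)) atTop (𝓝 ⊤)) :
    ∃ γ : ℝ, ∀ᶠ n in atTop, v (c n) = γ := by
  rw [WithTop.tendsto_nhds_top_iff] at hct
  push Not at hct
  obtain ⟨ρ, hρ⟩ := hct
  obtain ⟨i, hi⟩ := hvm ρ
  obtain ⟨N, hN⟩ := hc.isAdicCauchy i
  obtain ⟨n₀, hn₀, hcn₀⟩ := frequently_atTop.1 hρ N
  obtain ⟨γ, hγ⟩ := WithTop.ne_top_iff_exists.1 (hcn₀.trans_lt (WithTop.coe_lt_top ρ)).ne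
  refine ⟨γ, eventually_atTop.2 ⟨N, fun n hn => ?_⟩⟩
  rw [hγ]
  exact v.map_eq_of_lt_sub (hcn₀.trans_lt (hi _ (hN n n₀ hn hn₀)))

/-- The ideal `p(R̂)_∞`. -/
def infiniteValueIdeal (hv0 : ∀ x, 0 ≤ v x) : Ideal (AdicCompletion (maximalIdeal A) A) where
  carrier := {f | ∃ c, ConvergesTo c f ∧ Tendsto (fun n => v (c n)) atTop (𝓝 ⊤)}
  zero_mem' := ⟨fun _ => 0, by simpa using convergesTo_algebraMap (0 : A), by simp⟩
  add_mem' := fun ⟨c, hc, hct⟩ ⟨d, hd, hdt⟩ => ⟨c + d, hc.add hd, v.tendsto_nhds_top_add hct hdt⟩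
  smul_mem' := fun r _ ⟨c, hc, hct⟩ =>
    let ⟨d, hd⟩ := exists_convergesTo r
    ⟨d * c, hd.mul hc, v.tendsto_nhds_top_mul_left hv0 hct d⟩

variable {v}

theorem mem_infiniteValueIdeal {hv0 : ∀ x, 0 ≤ v x} :
    f ∈ infiniteValueIdeal v hv0 ↔ ∃ c, ConvergesTo c f ∧ Tendsto (fun n => v (c n)) atTop (𝓝 ⊤) :=
  Iff.rfl

theorem eq_zero_of_algebraMap_mem_infiniteValueIdeal {hv0 : ∀ x, 0 ≤ v x}
    (hvm : ∀ ρ : ℝ, ∃ n, ∀ x ∈ maximalIdeal A ^ n, (ρ : WithTop ℝ) < v x)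
    (hsupp : ∀ x, v x = ⊤ → x = 0) {x : A}
    (hx : algebraMap A _ x ∈ infiniteValueIdeal v hv0) : x = 0 :=
  let ⟨_, hc, hct⟩ := hx
  hsupp x (tendsto_nhds_unique tendsto_const_nhds
    (hc.tendsto_nhds_top v hvm (convergesTo_algebraMap x) hct))

theorem isPrime_infiniteValueIdeal {hv0 : ∀ x, 0 ≤ v x}
    (hvm : ∀ ρ : ℝ, ∃ n, ∀ x ∈ maximalIdeal A ^ n, (ρ : WithTop ℝ) < v x)
    (hsupp : ∀ x, v x = ⊤ → x = 0) : (infiniteValueIdeal v hv0).IsPrime := by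
  refine ⟨fun htop => one_ne_zero <| eq_zero_of_algebraMap_mem_infiniteValueIdeal (hv0 := hv0)
    hvm hsupp (by simp [htop]), fun {f g} ⟨e, he, het⟩ => ?_⟩
  by_contra! ⟨hf, hg⟩
  obtain ⟨c, hc⟩ := exists_convergesTo f
  obtain ⟨d, hd⟩ := exists_convergesTo g
  obtain ⟨γ, hγ⟩ := hc.exists_eventually_eq_coe v hvm fun hct => hf ⟨c, hc, hct⟩
  obtain ⟨δ, hδ⟩ := hd.exists_eventually_eq_coe v hvm fun hdt => hg ⟨d, hd, hdt⟩
  have htop : Tendsto (fun n => v (c n * d n)) atTop (𝓝 ⊤) :=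
    he.tendsto_nhds_top v hvm (hc.mul hd) het
  have hconst : Tendsto (fun n => v (c n * d n)) atTop (𝓝 ((γ + δ : ℝ) : WithTop ℝ)) :=
    tendsto_const_nhds.congr' <| by
      filter_upwards [hγ, hδ] with n hcn hdn
      rw [v.map_mul, hcn, hdn, WithTop.coe_add]
  exact WithTop.coe_ne_top (tendsto_nhds_unique hconst htop)

end Valuation

end Completion

theorem hasInfiniteValue_iff_tendsto {A : Type*} [CommRing A] [IsDomain A]
    (ν : FractionRing A → ℝ) (hmul hadd) (c : ℕ → A) :
    HasInfiniteValue ν c ↔ Tendsto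
      (fun n => (AddValuation.ofReal ν hmul hadd).comap (algebraMap A (FractionRing A)) (c n))
      atTop (𝓝 ⊤) := by
  simp only [HasInfiniteValue, WithTop.tendsto_nhds_top_iff, ← eventually_atTop]
  refine forall_congr' fun ρ => eventually_congr (.of_forall fun n => ?_)
  by_cases hc : c n = 0
  · simp [hc]
  · simp [hc, AddValuation.comap_ofReal_apply hc]

/-- Let `R` be a Noetherian local domain dominated by a rank 1
valuation ring of its quotient field, with (additive, real-valued) valuation `ν`.
The set `p(R̂)_∞` of elements of the completion `R̂` admitting a Cauchy sequence from
`R` converging to them along which `ν` tends to infinity is a prime ideal of `R̂`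
which contracts to `(0)` in `R`. -/
theorem prime_ideal_of_elements_of_infinite_value
    (ν : FractionRing R → ℝ)
    (hmul : ∀ x y : FractionRing R, x ≠ 0 → y ≠ 0 → ν (x * y) = ν x + ν y)
    (hadd : ∀ x y : FractionRing R, x ≠ 0 → y ≠ 0 → x + y ≠ 0 →
      min (ν x) (ν y) ≤ ν (x + y))
    (hR : ∀ x : R, x ≠ 0 → 0 ≤ ν (algebraMap R (FractionRing R) x))
    (hm : ∀ x : R, x ∈ IsLocalRing.maximalIdeal R → x ≠ 0 →
      0 < ν (algebraMap R (FractionRing R) x)) :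
    ∃ P : Ideal (AdicCompletion (IsLocalRing.maximalIdeal R) R),
      (∀ f, f ∈ P ↔ ∃ c : ℕ → R, IsAdicCauchy c ∧ ConvergesTo c f ∧
        HasInfiniteValue ν c) ∧
      P.IsPrime ∧
      (∀ x : R, algebraMap R (AdicCompletion (IsLocalRing.maximalIdeal R) R) x ∈ P →
        x = 0) := by
  set v := (AddValuation.ofReal ν hmul hadd).comap (algebraMap R (FractionRing R))
  have hv0 : ∀ x, 0 ≤ v x := fun x => by
    by_cases hx : x = 0
    · simp [hx]
    · exact (AddValuation.comap_ofReal_apply hx).symm ▸ WithTop.coe_nonneg.2 (hR x hx)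
  have hpos : ∀ x ∈ maximalIdeal R, 0 < v x := fun x hxm => by
    by_cases hx : x = 0
    · simp [hx]
    · exact (AddValuation.comap_ofReal_apply hx).symm ▸ WithTop.coe_pos.2 (hm x hxm hx)
  have hsupp : ∀ x, v x = ⊤ → x = 0 := fun x hxtop => by
    by_contra hx
    exact WithTop.coe_ne_top ((AddValuation.comap_ofReal_apply hx).symm.trans hxtop)
  have hvm := v.exists_forall_mem_pow_lt (Ideal.fg_of_isNoetherianRing _) hv0 hpos
  refine ⟨infiniteValueIdeal v hv0, fun f => ?_, isPrime_infiniteValueIdeal hvm hsupp,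
    fun x => eq_zero_of_algebraMap_mem_infiniteValueIdeal hvm hsupp⟩
  simp only [mem_infiniteValueIdeal, hasInfiniteValue_iff_tendsto ν hmul hadd]
  exact ⟨fun ⟨c, hc, hct⟩ => ⟨c, hc.isAdicCauchy, hc, hct⟩, fun ⟨c, _, hc, hct⟩ => ⟨c, hc, hct⟩⟩

end
end

section
/- Let $k$ be a field, $p(t) \in t\,k[[t]]$ transcendental over $k(t)$, $R = k[x,y]_{(x,y)}$, and let $\nu$ be the discrete rank 1 valuation on $k(x,y)$ given by $\nu(f) = \operatorname{ord}_t f(t,p(t))$. Then the prime ideal of elements of infinite value in $\hat R = k[[x,y]]$ is $p(\hat R)_\infty = (y - p(x))$; in particular it is a nonzero regular prime ideal, and $\hat R / p(\hat R)_\infty \cong k[[x]]$ is a regular local ring of dimension 1. -/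
/-!
A ring homomorphism `φ : R⟦y⟧ → R` that is the identity on `R` has kernel `(y - a)`, `a = φ y`:
the identity `φ f = f₀ + a · φ(tail f)` exhibits `f - φ f` as `y - a` times the series whose
`i`-th coefficient is `φ` of the `(i+1)`-st tail of `f`. Substitution `f ↦ f(t, p(t))` is such a
homomorphism with `a = p`; it is multiplicative because `Xᴺ ∣ pᴺ`, so its first `N` coefficients
only depend on the truncation of `f` below degree `N`.
-/

/-- Substitution `y ↦ p(t)` (with `x = t`) on `k[[x]][[y]]`, i.e. `f ↦ f(t, p(t))`.
For `p` with zero constant term the coefficient of `tᵐ` only receives contributions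
from the terms `yⁿ` with `n ≤ m`, so it is given by the finite sums below. -/
noncomputable def substY {k : Type*} [Field k] (p : PowerSeries k)
    (h : PowerSeries (PowerSeries k)) : PowerSeries k :=
  PowerSeries.mk fun m =>
    ∑ n ∈ Finset.range (m + 1),
      PowerSeries.coeff m (PowerSeries.coeff n h * p ^ n)

namespace PowerSeries

section Retraction

variable {R : Type*} [CommRing R] (φ : R⟦X⟧ →+* R) (hφ : ∀ r, φ (C r) = r)
include hφ

theorem map_eq_constantCoeff_add_mul_map_tail (f : R⟦X⟧) :
    φ f = constantCoeff f + φ X * φ (mk fun n => coeff (n + 1) f) := by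
  conv_lhs => rw [eq_X_mul_shift_add_const f]
  rw [map_add, map_mul, hφ, add_comm]

theorem X_sub_C_mul_tails_eq_sub_C_map (f : R⟦X⟧) :
    (X - C (φ X)) * mk (fun i => φ (mk fun n => coeff (n + i + 1) f)) = f - C (φ f) := by
  ext (_ | j)
  · rw [map_eq_constantCoeff_add_mul_map_tail φ hφ f]
    simp [coeff_zero_eq_constantCoeff_apply]
  · have tail_tail : (mk fun n => coeff (n + 1) (mk fun m => coeff (m + j + 1) f)) =
        mk fun n => coeff (n + (j + 1) + 1) f := by
      ext n
      simp only [coeff_mk]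
      ring_nf
    rw [sub_mul, map_sub, map_sub, coeff_succ_X_mul, coeff_C_mul, coeff_mk, coeff_mk, coeff_C,
      if_neg j.succ_ne_zero, sub_zero, map_eq_constantCoeff_add_mul_map_tail φ hφ, tail_tail,
      ← coeff_zero_eq_constantCoeff_apply, coeff_mk, zero_add, add_sub_cancel_right]

theorem ker_eq_span_X_sub_C : RingHom.ker φ = Ideal.span {X - C (φ X)} := by
  refine le_antisymm (fun f hf => ?_) ?_
  · have h := X_sub_C_mul_tails_eq_sub_C_map φ hφ f
    rw [RingHom.mem_ker.mp hf, map_zero, sub_zero] at h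
    exact Ideal.mem_span_singleton.mpr ⟨_, h.symm⟩
  · rw [Ideal.span_le, Set.singleton_subset_iff, SetLike.mem_coe, RingHom.mem_ker, map_sub, hφ,
      sub_self]

end Retraction

theorem X_sub_C_ne_zero {R : Type*} [CommRing R] [Nontrivial R] (a : R) :
    (X - C a : R⟦X⟧) ≠ 0 := fun h => by
  simpa [coeff_X, coeff_C] using congrArg (coeff 1) h

section Truncation

variable {R : Type*} [CommRing R] {p : R⟦X⟧} (hp : constantCoeff p = 0)
include hp

theorem coeff_mul_pow_eq_zero_of_lt {m n : ℕ} (h : m < n) (a : R⟦X⟧) : coeff m (a * p ^ n) = 0 :=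
  X_pow_dvd_iff.mp ((pow_dvd_pow_of_dvd (X_dvd_iff.mpr hp) n).mul_left a) m h

theorem trunc_eval_trunc (N : ℕ) (q : Polynomial R⟦X⟧) :
    trunc N ((trunc N (q : R⟦X⟧⟦X⟧)).eval p) = trunc N (q.eval p) := by
  obtain ⟨r, hr⟩ : Polynomial.X ^ N ∣ q - trunc N (q : R⟦X⟧⟦X⟧) :=
    Polynomial.X_pow_dvd_iff.mpr fun d hd => by
      rw [Polynomial.coeff_sub, coeff_trunc, if_pos hd, Polynomial.coeff_coe, sub_self]
  obtain ⟨s, hs⟩ : X ^ N ∣ q.eval p - (trunc N (q : R⟦X⟧⟦X⟧)).eval p := by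
    rw [← Polynomial.eval_sub, hr, Polynomial.eval_mul, Polynomial.eval_pow, Polynomial.eval_X]
    exact (pow_dvd_pow_of_dvd (X_dvd_iff.mpr hp) N).mul_right _
  rw [eq_comm, ← sub_eq_zero, ← map_sub, hs, trunc_X_pow_self_mul]

end Truncation

end PowerSeries

open PowerSeries

section Substitution

variable {k : Type*} [Field k] (p : k⟦X⟧)

theorem substY_C (g : k⟦X⟧) : substY p (C g) = g := by
  ext m
  rw [substY, coeff_mk, Finset.sum_eq_single 0 (fun n _ hn => by simp [coeff_C, hn]) (by simp)]
  simp

variable {p} (hp : constantCoeff p = 0)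
include hp

theorem substY_X : substY p (X : k⟦X⟧⟦X⟧) = p := by
  ext m
  rw [substY, coeff_mk]
  rcases m with _ | m
  · simp [coeff_X, coeff_zero_eq_constantCoeff_apply, hp]
  · rw [Finset.sum_eq_single 1 (fun n _ hn => by simp [coeff_X, hn]) (by simp)]
    simp

theorem trunc_substY (N : ℕ) (f : k⟦X⟧⟦X⟧) :
    trunc N (substY p f) = trunc N ((trunc N f).eval p) := by
  ext m
  rw [coeff_trunc, coeff_trunc]
  split_ifs with hm
  · rw [Polynomial.eval, eval₂_trunc_eq_sum_range, map_sum, substY, coeff_mk]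
    refine Finset.sum_subset (Finset.range_subset_range.mpr hm) fun n _ hn => ?_
    exact coeff_mul_pow_eq_zero_of_lt hp (by simpa using hn) _
  · rfl

theorem substY_mul (f g : k⟦X⟧⟦X⟧) : substY p (f * g) = substY p f * substY p g := by
  ext m
  have hm : m < m + 1 := m.lt_succ_self
  rw [← coeff_coe_trunc_of_lt hm, ← coeff_coe_trunc_of_lt (f := substY p f * _) hm]
  congr 2
  calc trunc (m + 1) (substY p (f * g))
      = trunc (m + 1) ((trunc (m + 1) (↑(trunc (m + 1) f * trunc (m + 1) g))).eval p) := by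
        rw [trunc_substY hp, Polynomial.coe_mul, trunc_trunc_mul_trunc]
    _ = trunc (m + 1) ((trunc (m + 1) f).eval p * (trunc (m + 1) g).eval p) := by
        rw [trunc_eval_trunc hp, Polynomial.eval_mul]
    _ = trunc (m + 1) (substY p f * substY p g) := by
        rw [← trunc_trunc_mul_trunc, ← trunc_substY hp, ← trunc_substY hp, trunc_trunc_mul_trunc]

noncomputable def substYRingHom : k⟦X⟧⟦X⟧ →+* k⟦X⟧ where
  toFun := substY p
  map_one' := by simpa using substY_C p 1
  map_zero' := by simpa using substY_C p 0
  map_add' f g := by ext m; simp [substY, add_mul, Finset.sum_add_distrib]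
  map_mul' := substY_mul hp

theorem substYRingHom_apply (f : k⟦X⟧⟦X⟧) : substYRingHom hp f = substY p f := rfl

end Substitution

theorem prime_of_infinite_value_is_generated_by_y_sub_p_general
    {k : Type*} [Field k] (p : PowerSeries k)
    (hp0 : PowerSeries.constantCoeff p = 0) :
    ∃ Φ : PowerSeries (PowerSeries k) →+* PowerSeries k,
      -- `Φ` is the substitution homomorphism `f ↦ f(t, p(t))`
      (∀ f, Φ f = substY p f) ∧
      -- its kernel, the prime of elements of infinite value, equals `(y - p(x))`
      RingHom.ker Φ =
        Ideal.span {PowerSeries.X - PowerSeries.C p} ∧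
      RingHom.ker Φ ≠ ⊥ ∧
      (RingHom.ker Φ).IsPrime ∧
      -- `R̂ / p(R̂)_∞ ≅ k[[x]]`, a regular local ring of dimension 1
      Nonempty ((PowerSeries (PowerSeries k) ⧸ RingHom.ker Φ) ≃+* PowerSeries k) := by
  have hC : ∀ g, substYRingHom hp0 (C g) = g := substY_C p
  have hker : RingHom.ker (substYRingHom hp0) = Ideal.span {X - C p} := by
    rw [ker_eq_span_X_sub_C _ hC, substYRingHom_apply, substY_X hp0]
  refine ⟨substYRingHom hp0, substYRingHom_apply hp0, hker, ?_, RingHom.ker_isPrime _,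
    ⟨RingHom.quotientKerEquivOfSurjective fun g => ⟨C g, hC g⟩⟩⟩
  rw [hker, Ne, Ideal.span_singleton_eq_bot]
  exact X_sub_C_ne_zero p

/-- Let `k` be a field, `p(t) ∈ t·k[[t]]` transcendental over
`k(t)`, `R = k[x,y]_{(x,y)}`, and let `ν` be the discrete rank 1 valuation on
`k(x,y)` given by `ν(f) = ord_t f(t, p(t))`.  The prime ideal of elements of
infinite value in `R̂ = k[[x,y]]` (realized as `k[[x]][[y]]`) is the kernel of the
substitution homomorphism `k[[x,y]] → k[[t]]`, `f ↦ f(t, p(t))`, and it equals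
`(y - p(x))`; in particular it is a nonzero regular prime ideal and
`R̂ / p(R̂)_∞ ≅ k[[x]]` is a regular local ring of dimension 1. -/
theorem prime_of_infinite_value_is_generated_by_y_sub_p
    {k : Type*} [Field k] (p : PowerSeries k)
    (hp0 : PowerSeries.constantCoeff p = 0)
    (hptrans : ∀ q : Polynomial (Polynomial k),
      Polynomial.eval₂ Polynomial.coeToPowerSeries.ringHom p q = 0 → q = 0) :
    ∃ Φ : PowerSeries (PowerSeries k) →+* PowerSeries k,
      -- `Φ` is the substitution homomorphism `f ↦ f(t, p(t))`
      (∀ f, Φ f = substY p f) ∧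
      -- its kernel, the prime of elements of infinite value, equals `(y - p(x))`
      RingHom.ker Φ =
        Ideal.span {PowerSeries.X - PowerSeries.C p} ∧
      RingHom.ker Φ ≠ ⊥ ∧
      (RingHom.ker Φ).IsPrime ∧
      -- `R̂ / p(R̂)_∞ ≅ k[[x]]`, a regular local ring of dimension 1
      Nonempty ((PowerSeries (PowerSeries k) ⧸ RingHom.ker Φ) ≃+* PowerSeries k) :=
  prime_of_infinite_value_is_generated_by_y_sub_p_general p hp0
end

section
/- Let $A$ be a domain with quotient field $F$, $a \subset A$ a prime ideal. Then there exists a valuation ring $W$ of $F$ with $A \subseteq W$, $m_W \cap A = a$, and $W/m_W$ algebraic over the quotient field of $A/a$. -/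
/-!
Chevalley's extension argument. Extend `A → A/a → Ω`, with `Ω` an algebraic closure of
`Q(A/a)`, to an `A`-algebra homomorphism `φ : S → Ω` on a subalgebra `S` of `F` that is maximal
by Zorn's lemma. Extending `φ` to the localization at `ker φ` shows that `S` is local with maximal
ideal `ker φ`. If a maximal ideal of `S[x]` lies over `ker φ`, its residue field is finitely
generated over the field `S/ker φ`, hence finite by Zariski's lemma, so it embeds into `Ω` and `φ`
extends to `S[x]`; thus `x ∈ S`. By going-up this holds whenever `x` is integral over `S`, and if
`x ∉ S` then `ker φ` generates the unit ideal of `S[x]`, which makes `x⁻¹` integral over `S`.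
Hence `S` is a valuation ring; its residue field embeds into `Ω`, which is algebraic over
`Q(A/a)`, and its center on `A` is `ker (A → Ω) = a`.
-/

open Polynomial

theorem RingHom.exists_comp_algebraMap_eq_of_finiteType {S T Ω : Type*} [CommRing S]
    [CommRing T] [Field Ω] [IsAlgClosed Ω] [Algebra S T] [Algebra.FiniteType S T] (φ : S →+* Ω)
    [(RingHom.ker φ).IsMaximal] (Q : Ideal T) [Q.IsMaximal]
    (hQ : RingHom.ker φ ≤ Q.comap (algebraMap S T)) :
    ∃ ψ : T →+* Ω, ψ.comp (algebraMap S T) = φ := by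
  let := Ideal.Quotient.field (RingHom.ker φ)
  let := Ideal.Quotient.field Q
  let : Algebra (S ⧸ RingHom.ker φ) (T ⧸ Q) := Ideal.Quotient.algebraQuotientOfLEComap hQ
  let : Algebra (S ⧸ RingHom.ker φ) Ω := (RingHom.kerLift φ).toAlgebra
  have : IsScalarTower S (S ⧸ RingHom.ker φ) (T ⧸ Q) := .of_algebraMap_eq fun _ ↦ rfl
  have : Algebra.FiniteType (S ⧸ RingHom.ker φ) (T ⧸ Q) := .of_restrictScalars_finiteType S _ _
  have := finite_of_finite_type_of_isJacobsonRing (S ⧸ RingHom.ker φ) (T ⧸ Q)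
  let ψ : T ⧸ Q →ₐ[S ⧸ RingHom.ker φ] Ω := IsAlgClosed.lift
  exact ⟨ψ.toRingHom.comp (Ideal.Quotient.mk Q), RingHom.ext fun s ↦ ψ.commutes (.mk _ s)⟩

theorem Ideal.exists_polynomial_coeff_notMem_aeval_eq_zero {A L : Type*} [CommRing A]
    [CommRing L] (a : Ideal A) [Algebra A L] [Algebra (A ⧸ a) L] [IsScalarTower A (A ⧸ a) L]
    {z : L} (hz : IsAlgebraic (A ⧸ a) z) : ∃ q : A[X], (∃ i, q.coeff i ∉ a) ∧ aeval z q = 0 := by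
  obtain ⟨p, hp0, hpz⟩ := hz
  obtain ⟨q, rfl⟩ := map_surjective (algebraMap A (A ⧸ a)) Ideal.Quotient.mk_surjective p
  refine ⟨q, ?_, by rwa [aeval_map_algebraMap] at hpz⟩
  by_contra! h
  exact hp0 (Polynomial.ext fun i ↦ by simpa [Ideal.Quotient.eq_zero_iff_mem] using h i)

namespace Subalgebra

structure Lifts (R K Ω : Type*) [CommRing R] [CommRing K] [CommRing Ω] [Algebra R K]
    [Algebra R Ω] where
  carrier : Subalgebra R K
  emb : carrier →ₐ[R] Ω

namespace Lifts

variable {R K Ω : Type*} [CommRing R]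

section CommRing

variable [CommRing K] [CommRing Ω] [Algebra R K] [Algebra R Ω]

instance : PartialOrder (Lifts R K Ω) where
  le P₁ P₂ := ∃ h : P₁.carrier ≤ P₂.carrier, ∀ x, P₂.emb (inclusion h x) = P₁.emb x
  le_refl P := ⟨le_rfl, fun _ ↦ rfl⟩
  le_trans P₁ P₂ P₃ := by
    rintro ⟨h₁₂, h₁₂'⟩ ⟨h₂₃, h₂₃'⟩
    exact ⟨h₁₂.trans h₂₃, fun x ↦ (h₂₃' (inclusion h₁₂ x)).trans (h₁₂' x)⟩
  le_antisymm := by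
    rintro ⟨S₁, e₁⟩ ⟨S₂, e₂⟩ ⟨h₁₂, -⟩ ⟨h₂₁, h₂₁'⟩
    obtain rfl : S₁ = S₂ := h₁₂.antisymm h₂₁
    congr
    exact AlgHom.ext h₂₁'

noncomputable instance [FaithfulSMul R K] : Inhabited (Lifts R K Ω) :=
  ⟨⟨⊥, (Algebra.ofId R Ω).comp
    (Algebra.botEquivOfInjective (FaithfulSMul.algebraMap_injective R K)).toAlgHom⟩⟩

theorem exists_upperBound (c : Set (Lifts R K Ω)) (hc : IsChain (· ≤ ·) c) (hne : c.Nonempty) :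
    ∃ ub, ∀ P ∈ c, P ≤ ub := by
  have := hne.to_subtype
  have dir : Directed (· ≤ ·) fun P : c ↦ P.1.carrier :=
    hc.directedOn.directed_val.mono_comp _ fun _ _ h ↦ h.1
  have compat (P₁ P₂ : c) (h : P₁.1.carrier ≤ P₂.1.carrier) :
      P₁.1.emb = P₂.1.emb.comp (inclusion h) :=
    AlgHom.ext fun x ↦ (hc.total P₁.2 P₂.2).elim (fun h₁₂ ↦ (h₁₂.2 x).symm) fun h₂₁ ↦ by
      rw [AlgHom.comp_apply, ← h₂₁.2 (inclusion h x), inclusion_inclusion, inclusion_self,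
        AlgHom.id_apply]
  refine ⟨⟨_, iSupLift _ dir (fun P ↦ P.1.emb) compat _ le_rfl⟩, fun P hP ↦
    ⟨le_iSup (fun P : c ↦ P.1.carrier) ⟨P, hP⟩, fun x ↦ ?_⟩⟩
  exact iSupLift_inclusion (K := fun P : c ↦ P.1.carrier) (dir := dir) (hf := compat)
    (i := ⟨P, hP⟩) x _

theorem exists_isMax [Nonempty (Lifts R K Ω)] : ∃ P : Lifts R K Ω, IsMax P :=
  zorn_le_nonempty fun c hc hne ↦ exists_upperBound c hc hne

theorem le_carrier_of_isMax {P : Lifts R K Ω} (hP : IsMax P) {T : Subalgebra R K}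
    (hPT : P.carrier ≤ T) (ψ : T →+* Ω) (hψ : ∀ x, ψ (inclusion hPT x) = P.emb x) :
    T ≤ P.carrier := by
  let ψ' : T →ₐ[R] Ω :=
    { ψ with commutes' := fun r ↦ by simpa using hψ (algebraMap R P.carrier r) }
  exact (hP (b := ⟨T, ψ'⟩) ⟨hPT, hψ⟩).1

end CommRing

section Field

variable [Field K] [Field Ω] [Algebra R K] [Algebra R Ω] {P : Lifts R K Ω}

theorem isUnit_of_emb_ne_zero (hP : IsMax P) {r : P.carrier} (hr : P.emb r ≠ 0) : IsUnit r := by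
  let p : Ideal P.carrier.toSubring := RingHom.ker (P.emb : P.carrier →+* Ω)
  have : p.IsPrime := RingHom.ker_isPrime _
  let L := LocalSubring.ofPrime P.carrier.toSubring p
  let T : Subalgebra R K :=
    { L.toSubring with
      algebraMap_mem' := fun r ↦ show _ ∈ L.toSubring from
        LocalSubring.le_ofPrime _ _ (P.carrier.algebraMap_mem r) }
  have hunits (s : p.primeCompl) : IsUnit (P.emb s) := isUnit_iff_ne_zero.mpr s.2
  let ψ : L.toSubring →+* Ω := IsLocalization.lift (M := p.primeCompl) hunits
  have hT : T ≤ P.carrier := le_carrier_of_isMax hP (LocalSubring.le_ofPrime _ p) ψ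
    fun x ↦ IsLocalization.lift_eq (S := L.toSubring) hunits x
  obtain ⟨s, hs⟩ := isUnit_iff_exists_inv.mp
    (IsLocalization.map_units (M := p.primeCompl) L.toSubring ⟨r, hr⟩)
  exact isUnit_iff_exists_inv.mpr ⟨⟨s, hT s.2⟩, Subtype.ext congr(($hs).1)⟩

theorem isUnit_iff_emb_ne_zero (hP : IsMax P) (r : P.carrier) : IsUnit r ↔ P.emb r ≠ 0 :=
  ⟨fun h ↦ (h.map P.emb).ne_zero, isUnit_of_emb_ne_zero hP⟩

theorem ker_emb_isMaximal (hP : IsMax P) : (RingHom.ker P.emb).IsMaximal := by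
  refine Ideal.isMaximal_def.mpr ⟨RingHom.ker_ne_top _, fun J hJ ↦ ?_⟩
  obtain ⟨x, hxJ, hx⟩ := SetLike.exists_of_lt hJ
  exact J.eq_top_of_isUnit_mem hxJ (isUnit_of_emb_ne_zero hP hx)

variable [IsAlgClosed Ω]

theorem mem_carrier_of_isMaximal (hP : IsMax P) {x : K}
    (Q : Ideal (Algebra.adjoin P.carrier {x})) [Q.IsMaximal]
    (hQ : RingHom.ker P.emb ≤ Q.comap (algebraMap _ _)) : x ∈ P.carrier := by
  have : (RingHom.ker (P.emb : P.carrier →+* Ω)).IsMaximal := ker_emb_isMaximal hP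
  have : Algebra.FiniteType P.carrier (Algebra.adjoin P.carrier {x}) :=
    .adjoin_of_finite (Set.finite_singleton x)
  obtain ⟨ψ, hψ⟩ := RingHom.exists_comp_algebraMap_eq_of_finiteType (P.emb : P.carrier →+* Ω) Q hQ
  have hPT : P.carrier ≤ (Algebra.adjoin P.carrier {x}).restrictScalars R :=
    fun y hy ↦ (Algebra.adjoin P.carrier {x}).algebraMap_mem ⟨y, hy⟩
  exact le_carrier_of_isMax hP hPT ψ (RingHom.congr_fun hψ)
    (Algebra.self_mem_adjoin_singleton P.carrier x)

theorem mem_carrier_of_isIntegral (hP : IsMax P) {x : K} (hx : IsIntegral P.carrier x) :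
    x ∈ P.carrier := by
  have := ker_emb_isMaximal hP
  have : Algebra.IsIntegral P.carrier (Algebra.adjoin P.carrier {x}) :=
    Algebra.IsIntegral.adjoin (by simpa)
  have hker : RingHom.ker (algebraMap P.carrier (Algebra.adjoin P.carrier {x})) ≤
      RingHom.ker P.emb := fun r hr ↦ by
    obtain rfl : r = 0 := Subtype.ext congr(($hr : K))
    exact zero_mem _
  obtain ⟨Q, hQ, hQP⟩ := Ideal.exists_ideal_over_maximal_of_isIntegral _ hker
  exact mem_carrier_of_isMaximal hP Q hQP.ge

theorem mem_or_inv_mem (hP : IsMax P) (x : K) : x ∈ P.carrier ∨ x⁻¹ ∈ P.carrier := by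
  refine or_iff_not_imp_left.mpr fun hx ↦ ?_
  have hmap :
      (RingHom.ker P.emb).map (algebraMap P.carrier (Algebra.adjoin P.carrier {x})) = ⊤ := by
    by_contra hne
    obtain ⟨Q, hQ, hle⟩ := Ideal.exists_le_maximal _ hne
    exact hx (mem_carrier_of_isMaximal hP Q (Ideal.map_le_iff_le_comap.mp hle))
  let := invertibleOfNonzero fun h : x = 0 ↦ hx (h ▸ zero_mem _)
  obtain ⟨p, hp, hpx⟩ := Algebra.exists_aeval_invOf_eq_zero_of_idealMap_adjoin_sup_span_eq_top x
    _ (RingHom.ker_ne_top _) (top_unique (hmap.ge.trans le_sup_left))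
  rw [RingHom.mem_ker, map_sub, map_one, sub_eq_zero] at hp
  have H : IsUnit p.leadingCoeff := isUnit_of_emb_ne_zero hP (by simp [hp])
  exact mem_carrier_of_isIntegral hP
    ⟨.C H.unit⁻¹.1 * p, by simp [Polynomial.Monic], by simpa using .inr hpx⟩

def toValuationSubring (hP : IsMax P) : ValuationSubring K :=
  ⟨P.carrier.toSubring, mem_or_inv_mem hP⟩

end Field

end Lifts

end Subalgebra

/-- Let `A` be a domain with quotient field `F` and `a ⊂ A` a
prime ideal.  Then there is a valuation ring `W` of `F` containing `A`, with center
`a` on `A` (i.e. `m_W ∩ A = a`) and with residue field `W/m_W` algebraic over the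
quotient field of `A/a`.  The last condition is expressed as: every `y ∈ W`
satisfies, modulo `m_W`, a polynomial with coefficients in `A` not all of which lie
in `a`. -/
theorem exists_valuation_ring_with_center_and_algebraic_residue
    {A : Type*} [CommRing A] [IsDomain A] (a : Ideal A) (ha : a.IsPrime) :
    ∃ W : ValuationSubring (FractionRing A), ∃ ι : A →+* W,
      (∀ x : A, (ι x : FractionRing A) = algebraMap A (FractionRing A) x) ∧
      -- the center of `W` on `A` is `a` : `m_W ∩ A = a`
      (∀ x : A, ¬ IsUnit (ι x) ↔ x ∈ a) ∧
      -- `W/m_W` is algebraic over `Q(A/a)`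
      (∀ y : W, ∃ q : Polynomial A,
        (∃ i, q.coeff i ∉ a) ∧ ¬ IsUnit (Polynomial.eval y (q.map ι))) := by
  let k := FractionRing (A ⧸ a)
  let Ω := AlgebraicClosure k
  obtain ⟨P, hP⟩ := Subalgebra.Lifts.exists_isMax (R := A) (K := FractionRing A) (Ω := Ω)
  have hker (x : A) : algebraMap A Ω x = 0 ↔ x ∈ a := by
    rw [IsScalarTower.algebraMap_apply A (A ⧸ a) Ω, IsScalarTower.algebraMap_apply (A ⧸ a) k Ω,
      map_eq_zero_iff _ (algebraMap k Ω).injective, IsFractionRing.to_map_eq_zero_iff,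
      Ideal.Quotient.algebraMap_eq, Ideal.Quotient.eq_zero_iff_mem]
  refine ⟨Subalgebra.Lifts.toValuationSubring hP, algebraMap A P.carrier, fun _ ↦ rfl,
    fun x ↦ ?_, fun ⟨y, hy⟩ ↦ ?_⟩
  · change ¬IsUnit (algebraMap A P.carrier x) ↔ x ∈ a
    rw [Subalgebra.Lifts.isUnit_iff_emb_ne_zero hP, not_not, AlgHom.commutes, hker]
  · obtain ⟨q, hqa, hqy⟩ := a.exists_polynomial_coeff_notMem_aeval_eq_zero
      ((IsFractionRing.isAlgebraic_iff (A ⧸ a) k Ω).mpr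
        (Algebra.IsAlgebraic.isAlgebraic (P.emb ⟨y, hy⟩)))
    refine ⟨q, hqa, ?_⟩
    change ¬IsUnit (eval (⟨y, hy⟩ : P.carrier) (q.map (algebraMap A P.carrier)))
    rw [Subalgebra.Lifts.isUnit_iff_emb_ne_zero hP, not_not, eval_map_algebraMap,
      ← aeval_algHom_apply, hqy]
end

section
/- Let $U^*$ be an integral domain with an action of a finite abelian group $G$ by ring automorphisms, and let $U = (U^*)^G$ be the fixed subring, with quotient fields $Q(U^*)$ and $Q(U)$. Suppose $U^*$ is a directed union $U^* = \bigcup_i S_i$ of $G$-stable subrings $S_i$ such that each $S_i$ is module-finite over $R_i := S_i^G$ and $Q(S_i)^G = Q(R_i)$. Then $Q(U^*)^G = Q(U)$, and $Q(U^*)$ is a finite Galois extension of $Q(U)$ with Galois group (a quotient of) $G$. -/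
/-- Let `U*` be an integral domain with an action of a finite
abelian group `G` by ring automorphisms and fixed ring `U = (U*)^G`, and suppose
`U*` is a directed union of `G`-stable subrings `S i`, each module-finite over
`R i = (S i)^G` and with `Q(S i)^G = Q(R i)`.  Then `Q(U*)^G = Q(U)` and `Q(U*)` is
a finite Galois extension of `Q(U)` whose Galois group is a quotient of `G`.
Here `L = Q(U*)` carries the (unique) extension of the `G`-action, assumed given as
a `MulSemiringAction` compatible with the one on `U*`. -/
theorem fraction_field_of_fixed_ring_of_directed_union
    {G : Type*} [CommGroup G] [Finite G]
    {A : Type*} [CommRing A] [IsDomain A] [MulSemiringAction G A]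
    [MulSemiringAction G (FractionRing A)]
    (hcomp : ∀ (σ : G) (x : A),
      σ • (algebraMap A (FractionRing A) x) = algebraMap A (FractionRing A) (σ • x))
    {I : Type*} [Preorder I] [IsDirected I (· ≤ ·)] [Nonempty I]
    (S : I → Subring A) (hmono : Monotone S)
    (hunion : ∀ x : A, ∃ i, x ∈ S i)
    (hstable : ∀ i (σ : G), ∀ x ∈ S i, σ • x ∈ S i)
    -- each `S i` is module-finite over its fixed subring `R i = (S i)^G`
    (hfinite : ∀ i, ∃ s : Finset A, (∀ y ∈ s, y ∈ S i) ∧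
      ∀ x ∈ S i, ∃ c : A → A,
        (∀ y ∈ s, c y ∈ S i ∧ ∀ σ : G, σ • (c y) = c y) ∧
        x = ∑ y ∈ s, c y * y)
    -- `Q(S i)^G = Q(R i)` for each `i`
    (hfix : ∀ i, ∀ ξ : FractionRing A,
      (∃ a b, a ∈ S i ∧ b ∈ S i ∧ b ≠ 0 ∧
        ξ * algebraMap A (FractionRing A) b = algebraMap A (FractionRing A) a) →
      (∀ σ : G, σ • ξ = ξ) →
      ∃ a b, a ∈ S i ∧ b ∈ S i ∧ b ≠ 0 ∧ (∀ σ : G, σ • a = a) ∧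
        (∀ σ : G, σ • b = b) ∧
        ξ * algebraMap A (FractionRing A) b = algebraMap A (FractionRing A) a) :
    -- `Q(U*)^G = Q(U)` :
    (∀ ξ : FractionRing A, (∀ σ : G, σ • ξ = ξ) ↔
      ∃ a b : A, (∀ σ : G, σ • a = a) ∧ (∀ σ : G, σ • b = b) ∧ b ≠ 0 ∧
        ξ * algebraMap A (FractionRing A) b = algebraMap A (FractionRing A) a) ∧
    -- `Q(U*)` is finite Galois over the fixed field, with Galois group a quotient
    -- of `G`
    FiniteDimensional (FixedPoints.subfield G (FractionRing A)) (FractionRing A) ∧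
    IsGalois (FixedPoints.subfield G (FractionRing A)) (FractionRing A) ∧
    ∃ φ : G →* ((FractionRing A) ≃ₐ[FixedPoints.subfield G (FractionRing A)]
      (FractionRing A)), Function.Surjective φ := by
  refine ⟨?_, inferInstance, inferInstance,
    MulSemiringAction.toAlgAut G (FixedPoints.subfield G (FractionRing A)) (FractionRing A),
    FixedPoints.toAlgAut_surjective G (FractionRing A)⟩
  intro ξ
  constructor
  · intro hξ
    obtain ⟨⟨a', b'⟩, hab⟩ := IsLocalization.surj (nonZeroDivisors A) ξ
    obtain ⟨i, hi⟩ := hunion a'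
    obtain ⟨j, hj⟩ := hunion (b' : A)
    obtain ⟨k, hik, hjk⟩ := directed_of (· ≤ ·) i j
    obtain ⟨a, b, _, _, hb0, ha, hb, h⟩ := hfix k ξ
      ⟨a', b', hmono hik hi, hmono hjk hj, nonZeroDivisors.ne_zero b'.2, hab⟩ hξ
    exact ⟨a, b, ha, hb, hb0, h⟩
  · rintro ⟨a, b, ha, hb, hb0, h⟩ σ
    have hbne : algebraMap A (FractionRing A) b ≠ 0 := by
      simpa using (IsFractionRing.injective A (FractionRing A)).ne hb0
    have := congrArg (σ • ·) h
    simp only [smul_mul', hcomp, ha σ, hb σ] at this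
    rw [← h] at this
    exact mul_right_cancel₀ hbne this
end
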